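/- Every collection of four jointly distributed discrete random variables (X_1, X_2, X_3, X_4) whose joint distribution assigns positive probability to at most 3 outcomes satisfies all six Ingleton inequalities: Ingleton_{ij} = I(X_k;X_l|X_i) + I(X_k;X_l|X_j) + I(X_i;X_j) − I(X_k;X_l) ≥ 0 for every pair of distinct i, j ∈ {1,2,3,4}, where {k,l} = {1,2,3,4}∖{i,j}. In other words, no distribution on at most 3 atoms can violate the Ingleton inequality. -/
import Mathlib


open Finset

variable {N : ℕ} {X : Fin N → Type} [∀ i, Fintype (X i)] [∀ i, DecidableEq (X i)]

/-- Marginal of the joint pmf `p` on the coordinates in `A`. -/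
noncomputable def marg (p : (∀ i, X i) → ℝ) (A : Finset (Fin N)) :
    (∀ i : {j // j ∈ A}, X i.1) → ℝ :=
  fun y => ∑ x ∈ Finset.univ.filter
    (fun x : ∀ i, X i => ∀ i : {j // j ∈ A}, x i.1 = y i), p x

/-- Shannon entropy in bits of the marginal of `p` on the coordinates in `A`. -/
noncomputable def entH (p : (∀ i, X i) → ℝ) (A : Finset (Fin N)) : ℝ :=
  -∑ y : ∀ i : {j // j ∈ A}, X i.1, marg p A y * Real.logb 2 (marg p A y)

/-- Conditional mutual information `I(X_i;X_j|X_K)` in bits, via entropies. -/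
noncomputable def condMI (p : (∀ i, X i) → ℝ) (i j : Fin N) (K : Finset (Fin N)) : ℝ :=
  entH p (insert i K) + entH p (insert j K) - entH p K - entH p (insert i (insert j K))

section Ent
variable (p : (∀ i, X i) → ℝ)

def fib (A : Finset (Fin N)) (x : ∀ i, X i) : Finset (∀ i, X i) :=
  univ.filter (fun z => ∀ i ∈ A, z i = x i)

noncomputable def mm (A : Finset (Fin N)) (x : ∀ i, X i) : ℝ := ∑ z ∈ fib A x, p z

lemma mem_fib {A : Finset (Fin N)} {x z : ∀ i, X i} :
    z ∈ fib A x ↔ ∀ i ∈ A, z i = x i := by simp [fib]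

lemma self_mem_fib {A : Finset (Fin N)} {x : ∀ i, X i} : x ∈ fib A x := by
  simp [mem_fib]

def restr (A : Finset (Fin N)) (x : ∀ i, X i) : ∀ i : {j // j ∈ A}, X i.1 :=
  fun i => x i.1

lemma fib_eq_restr_fiber {A : Finset (Fin N)} {x : ∀ i, X i} :
    fib A x = univ.filter (fun z => restr A z = restr A x) := by
  ext z
  simp only [mem_fib, mem_filter, mem_univ, true_and, funext_iff, restr]
  constructor
  · intro h i; exact h i.1 i.2
  · intro h i hi; exact h ⟨i, hi⟩

lemma mm_eq_marg {A : Finset (Fin N)} {x : ∀ i, X i} :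
    mm p A x = marg p A (restr A x) := by
  rw [mm, marg, fib_eq_restr_fiber]
  congr 1
  ext z
  simp [restr, funext_iff]

lemma marg_eq_sum {A : Finset (Fin N)} (y : ∀ i : {j // j ∈ A}, X i.1) :
    marg p A y = ∑ x ∈ univ.filter (fun x => restr A x = y), p x := by
  rw [marg]
  congr 1
  ext z
  simp [restr, funext_iff]

lemma mm_congr {A : Finset (Fin N)} {x y : ∀ i, X i} (h : ∀ i ∈ A, x i = y i) :
    mm p A x = mm p A y := by
  unfold mm
  congr 1
  ext z
  simp only [mem_fib]
  constructor
  · intro hz i hi; rw [hz i hi, h i hi]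
  · intro hz i hi; rw [hz i hi, h i hi]

lemma entH_eq_mm (A : Finset (Fin N)) :
    entH p A = -∑ x, p x * Real.logb 2 (mm p A x) := by
  rw [entH]
  congr 1
  rw [← Finset.sum_fiberwise (univ : Finset (∀ i, X i)) (restr A)
    (fun x => p x * Real.logb 2 (mm p A x))]
  apply Finset.sum_congr rfl
  intro y _
  rw [marg_eq_sum, Finset.sum_mul]
  apply Finset.sum_congr rfl
  intro x hx
  simp only [mem_filter] at hx
  rw [mm_eq_marg, hx.2, marg_eq_sum]

variable (hp : ∀ x, 0 ≤ p x)
include hp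

lemma mm_nonneg (A : Finset (Fin N)) (x : ∀ i, X i) : 0 ≤ mm p A x :=
  Finset.sum_nonneg fun z _ => hp z

lemma le_mm (A : Finset (Fin N)) (x : ∀ i, X i) : p x ≤ mm p A x :=
  Finset.single_le_sum (fun z _ => hp z) self_mem_fib

lemma mm_mono_set {A B : Finset (Fin N)} (h : A ⊆ B) (x : ∀ i, X i) :
    mm p B x ≤ mm p A x := by
  apply Finset.sum_le_sum_of_subset_of_nonneg
  · intro z hz
    rw [mem_fib] at hz ⊢
    exact fun i hi => hz i (h hi)
  · exact fun z _ _ => hp z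

lemma entH_empty (hsum : ∑ x, p x = 1) : entH p (∅ : Finset (Fin N)) = 0 := by
  rw [entH_eq_mm]
  have h : ∀ x : ∀ i, X i, mm p ∅ x = 1 := by
    intro x
    rw [mm]
    rw [show fib (∅ : Finset (Fin N)) x = univ by ext z; simp [mem_fib]]
    exact hsum
  simp [h]

lemma entH_mono {A B : Finset (Fin N)} (h : A ⊆ B) : entH p A ≤ entH p B := by
  rw [entH_eq_mm, entH_eq_mm, neg_le_neg_iff]
  apply Finset.sum_le_sum
  intro x _
  rcases eq_or_lt_of_le (hp x) with h0 | h0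
  · rw [← h0]; simp
  · apply mul_le_mul_of_nonneg_left _ (le_of_lt h0)
    rw [Real.logb_le_logb (by norm_num)
      (lt_of_lt_of_le h0 (le_mm p hp B x))
      (lt_of_lt_of_le h0 (le_mm p hp A x))]
    exact mm_mono_set p hp h x

lemma S_le (A B : Finset (Fin N)) :
    ∑ x, p x * (mm p A x * mm p B x) / (mm p (A ∪ B) x * mm p (A ∩ B) x)
      ≤ ∑ x, p x := by
  set W := A ∪ B with hW
  set U := A ∩ B with hU
  have step1 : ∀ x, p x * (mm p A x * mm p B x) / (mm p W x * mm p U x)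
      = ∑ x1 ∈ fib B x, ∑ x2 ∈ fib A x, p x * p x1 * p x2 / (mm p W x * mm p U x) := by
    intro x
    rw [show mm p A x * mm p B x = mm p B x * mm p A x from mul_comm _ _, mm, mm,
      Finset.sum_mul_sum, Finset.mul_sum, Finset.sum_div]
    refine Finset.sum_congr rfl fun x1 _ => ?_
    rw [Finset.mul_sum, Finset.sum_div]
    exact Finset.sum_congr rfl fun x2 _ => by ring
  calc ∑ x, p x * (mm p A x * mm p B x) / (mm p W x * mm p U x)
      = ∑ x, ∑ x1 ∈ fib B x, ∑ x2 ∈ fib A x,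
          p x * p x1 * p x2 / (mm p W x * mm p U x) := by
        exact Finset.sum_congr rfl fun x _ => step1 x
    _ = ∑ x1, ∑ x ∈ fib B x1, ∑ x2 ∈ fib A x,
          p x * p x1 * p x2 / (mm p W x * mm p U x) := by
        apply Finset.sum_comm'
        intro x y
        simp only [mem_univ, true_and, and_true, mem_fib]
        constructor
        · intro h i hi; rw [h i hi]
        · intro h i hi; rw [h i hi]
    _ = ∑ x1, ∑ x2, ∑ x ∈ (fib B x1).filter (fun x => ∀ i ∈ A, x i = x2 i),
          p x * p x1 * p x2 / (mm p W x * mm p U x) := by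
        refine Finset.sum_congr rfl fun x1 _ => ?_
        apply Finset.sum_comm'
        intro x y
        simp only [mem_univ, and_true, true_and, mem_filter, mem_fib]
        constructor
        · rintro ⟨h1, h2⟩; exact ⟨h1, fun i hi => (h2 i hi).symm⟩
        · rintro ⟨h1, h2⟩; exact ⟨h1, fun i hi => (h2 i hi).symm⟩
    _ ≤ ∑ x1, ∑ x2, (if (∀ i ∈ U, x2 i = x1 i) then p x1 * p x2 / mm p U x1 else 0) := by
        refine Finset.sum_le_sum fun x1 _ => Finset.sum_le_sum fun x2 _ => ?_
        have hnn : (0:ℝ) ≤ p x1 * p x2 / mm p U x1 :=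
          div_nonneg (mul_nonneg (hp x1) (hp x2)) (mm_nonneg p hp U x1)
        set D := (fib B x1).filter (fun x => ∀ i ∈ A, x i = x2 i) with hD
        rcases Finset.eq_empty_or_nonempty D with hDe | ⟨x0, hx0⟩
        · rw [hDe, Finset.sum_empty]
          split
          · exact hnn
          · exact le_rfl
        · have hx0' := hx0
          rw [hD, mem_filter, mem_fib] at hx0'
          obtain ⟨hx0B, hx0A⟩ := hx0'
          have hUagree : ∀ i ∈ U, x2 i = x1 i := by
            intro i hi
            rw [hU, mem_inter] at hi
            rw [← hx0A i hi.1, hx0B i hi.2]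
          rw [if_pos hUagree]
          have hfib : ∀ x ∈ D, fib W x = D := by
            intro x hx
            rw [hD, mem_filter, mem_fib] at hx
            obtain ⟨hxB, hxA⟩ := hx
            ext z
            rw [mem_fib, hD, mem_filter, mem_fib]
            constructor
            · intro h
              have hzA : ∀ i ∈ A, z i = x2 i := fun i hi =>
                (h i (mem_union_left B hi)).trans (hxA i hi)
              have hzB : ∀ i ∈ B, z i = x1 i := fun i hi =>
                (h i (mem_union_right A hi)).trans (hxB i hi)
              exact ⟨hzB, hzA⟩
            · rintro ⟨hz1, hz2⟩
              intro i hi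
              rcases mem_union.mp hi with hi | hi
              · rw [hz2 i hi, hxA i hi]
              · rw [hz1 i hi, hxB i hi]
          have hmmU : ∀ x ∈ D, mm p U x = mm p U x1 := by
            intro x hx
            rw [hD, mem_filter, mem_fib] at hx
            exact mm_congr p (fun i hi => hx.1 i (mem_inter.mp hi).2)
          have hmmW : ∀ x ∈ D, mm p W x = ∑ z ∈ D, p z := by
            intro x hx
            rw [mm, hfib x hx]
          calc ∑ x ∈ D, p x * p x1 * p x2 / (mm p W x * mm p U x)
              = ∑ x ∈ D, p x1 * p x2 / mm p U x1 * (p x / (∑ z ∈ D, p z)) := by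
                refine Finset.sum_congr rfl fun x hx => ?_
                rw [hmmU x hx, hmmW x hx]; ring
            _ = p x1 * p x2 / mm p U x1 * ((∑ z ∈ D, p z) / (∑ z ∈ D, p z)) := by
                rw [← Finset.mul_sum, Finset.sum_div]
            _ ≤ p x1 * p x2 / mm p U x1 := by
                nlinarith [div_self_le_one ((∑ z ∈ D, p z))]
    _ ≤ ∑ x1, p x1 := by
        refine Finset.sum_le_sum fun x1 _ => ?_
        rw [← Finset.sum_filter]
        have : univ.filter (fun x2 => ∀ i ∈ U, x2 i = x1 i) = fib U x1 := rfl
        rw [this]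
        have heq : ∑ x2 ∈ fib U x1, p x1 * p x2 / mm p U x1
            = p x1 * (mm p U x1 / mm p U x1) := by
          rw [mm, ← Finset.sum_div, ← Finset.mul_sum, mul_div_assoc]
        rw [heq]
        nlinarith [div_self_le_one (mm p U x1), hp x1]

lemma entH_submod (A B : Finset (Fin N)) :
    entH p (A ∪ B) + entH p (A ∩ B) ≤ entH p A + entH p B := by
  have key : ∑ x, (p x * Real.logb 2 (mm p A x) + p x * Real.logb 2 (mm p B x)
      - p x * Real.logb 2 (mm p (A ∪ B) x) - p x * Real.logb 2 (mm p (A ∩ B) x)) ≤ 0 := by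
    have hterm : ∀ x, p x * Real.logb 2 (mm p A x) + p x * Real.logb 2 (mm p B x)
        - p x * Real.logb 2 (mm p (A ∪ B) x) - p x * Real.logb 2 (mm p (A ∩ B) x)
        ≤ (p x * (mm p A x * mm p B x) / (mm p (A ∪ B) x * mm p (A ∩ B) x) - p x)
          / Real.log 2 := by
      intro x
      rcases eq_or_lt_of_le (hp x) with h0 | h0
      · rw [← h0]
        simp
      · have hA := lt_of_lt_of_le h0 (le_mm p hp A x)
        have hB := lt_of_lt_of_le h0 (le_mm p hp B x)
        have hW := lt_of_lt_of_le h0 (le_mm p hp (A ∪ B) x)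
        have hU := lt_of_lt_of_le h0 (le_mm p hp (A ∩ B) x)
        have hl2 : (0:ℝ) < Real.log 2 := Real.log_pos (by norm_num)
        set t : ℝ := mm p A x * mm p B x / (mm p (A ∪ B) x * mm p (A ∩ B) x) with ht
        have htpos : 0 < t := by positivity
        have hlog : Real.log t ≤ t - 1 := Real.log_le_sub_one_of_pos htpos
        have hcomb : Real.logb 2 (mm p A x) + Real.logb 2 (mm p B x)
            - Real.logb 2 (mm p (A ∪ B) x) - Real.logb 2 (mm p (A ∩ B) x)
            = Real.log t / Real.log 2 := by
          rw [ht, Real.logb, Real.logb, Real.logb, Real.logb]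
          rw [Real.log_div (by positivity) (by positivity), Real.log_mul (ne_of_gt hA)
            (ne_of_gt hB), Real.log_mul (ne_of_gt hW) (ne_of_gt hU)]
          ring
        have heq1 : p x * Real.logb 2 (mm p A x) + p x * Real.logb 2 (mm p B x)
            - p x * Real.logb 2 (mm p (A ∪ B) x) - p x * Real.logb 2 (mm p (A ∩ B) x)
            = p x * (Real.log t / Real.log 2) := by
          rw [← hcomb]; ring
        rw [heq1]
        rw [show p x * (mm p A x * mm p B x) / (mm p (A ∪ B) x * mm p (A ∩ B) x)
          = p x * t from by rw [ht]; ring]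
        have h1 : p x * Real.log t ≤ p x * t - p x := by nlinarith
        calc p x * (Real.log t / Real.log 2) = (p x * Real.log t) / Real.log 2 := by ring
          _ ≤ (p x * t - p x) / Real.log 2 := by gcongr
    calc ∑ x, (p x * Real.logb 2 (mm p A x) + p x * Real.logb 2 (mm p B x)
        - p x * Real.logb 2 (mm p (A ∪ B) x) - p x * Real.logb 2 (mm p (A ∩ B) x))
        ≤ ∑ x, (p x * (mm p A x * mm p B x) / (mm p (A ∪ B) x * mm p (A ∩ B) x) - p x)
          / Real.log 2 := Finset.sum_le_sum fun x _ => hterm x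
      _ = (∑ x, p x * (mm p A x * mm p B x) / (mm p (A ∪ B) x * mm p (A ∩ B) x)
          - ∑ x, p x) / Real.log 2 := by
          rw [← Finset.sum_div, Finset.sum_sub_distrib]
      _ ≤ 0 := by
          apply div_nonpos_of_nonpos_of_nonneg
          · have := S_le p hp A B; linarith
          · exact le_of_lt (Real.log_pos (by norm_num))
  rw [Finset.sum_sub_distrib, Finset.sum_sub_distrib, Finset.sum_add_distrib] at key
  rw [entH_eq_mm, entH_eq_mm, entH_eq_mm, entH_eq_mm]
  linarith

end Ent

section Det

variable (p : (∀ i, X i) → ℝ)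

/-- On the support of `p`, the coordinates in `A` determine the coordinates in `B`. -/
def Det (A B : Finset (Fin N)) : Prop :=
  ∀ x x', 0 < p x → 0 < p x' → (∀ i ∈ A, x i = x' i) → ∀ i ∈ B, x i = x' i

/-- On the support of `p`, the coordinates in `A` determine the whole atom. -/
def Inj (A : Finset (Fin N)) : Prop :=
  ∀ x x', 0 < p x → 0 < p x' → (∀ i ∈ A, x i = x' i) → x = x'

lemma Det.mono_left {A A' B : Finset (Fin N)} (h : Det p A B) (hA : A ⊆ A') :
    Det p A' B := fun x x' px px' hag => h x x' px px' (fun i hi => hag i (hA hi))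

lemma Det.trans {A B C : Finset (Fin N)} (h1 : Det p A B) (h2 : Det p B C) :
    Det p A C := fun x x' px px' hag => h2 x x' px px' (h1 x x' px px' hag)

lemma Inj.mono {A A' : Finset (Fin N)} (h : Inj p A) (hA : A ⊆ A') :
    Inj p A' := fun x x' px px' hag => h x x' px px' (fun i hi => hag i (hA hi))

lemma Inj.det {A : Finset (Fin N)} (h : Inj p A) (B : Finset (Fin N)) :
    Det p A B := fun x x' px px' hag i _ => by rw [h x x' px px' hag]

variable (hp : ∀ x, 0 ≤ p x)
include hp

lemma entH_det {A B : Finset (Fin N)} (hdet : Det p A B) :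
    entH p (A ∪ B) = entH p A := by
  rw [entH_eq_mm, entH_eq_mm]
  congr 1
  refine Finset.sum_congr rfl fun x _ => ?_
  rcases eq_or_lt_of_le (hp x) with h0 | h0
  · rw [← h0]; ring
  · have hmm : mm p (A ∪ B) x = mm p A x := by
      rw [mm, mm]
      apply Finset.sum_subset
      · intro z hz
        rw [mem_fib] at hz ⊢
        exact fun i hi => hz i (mem_union_left B hi)
      · intro z hzA hzW
        by_contra hne
        have hzpos : 0 < p z := lt_of_le_of_ne (hp z) (Ne.symm hne)
        rw [mem_fib] at hzA
        apply hzW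
        rw [mem_fib]
        intro i hi
        rcases mem_union.mp hi with hi | hi
        · exact hzA i hi
        · exact hdet z x hzpos h0 hzA i hi
    rw [hmm]

lemma entH_union_eq {A B C : Finset (Fin N)} (h : Det p A B) (hC : A ∪ B = C) :
    entH p C = entH p A := by rw [← hC]; exact entH_det p hp h

lemma entH_inj {A : Finset (Fin N)} (h : Inj p A) : entH p A = entH p univ := by
  have := entH_union_eq p hp (h.det p univ) (Finset.union_eq_right.mpr (Finset.subset_univ A))
  exact this.symm

end Det

section Pairs
variable (p : (∀ i, X i) → ℝ)

/-- `m` is a "pair-type" coordinate with distinguished pair of atoms `s, t`. -/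
def IsPair (m : Fin N) (s t : ∀ i, X i) : Prop :=
  0 < p s ∧ 0 < p t ∧ s ≠ t ∧ s m = t m ∧
    ∀ x x', 0 < p x → 0 < p x' → x ≠ x' → x m = x' m →
      ((x = s ∧ x' = t) ∨ (x = t ∧ x' = s))

lemma pigeon {α β : Type*} [DecidableEq α] {S : Finset α} (hS : S.card ≤ 3)
    {x x' a b : α} (hx : x ∈ S) (hx' : x' ∈ S) (ha : a ∈ S) (hb : b ∈ S)
    (hxx : x ≠ x') (hab : a ≠ b)
    (hne : ¬((a = x ∧ b = x') ∨ (a = x' ∧ b = x)))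
    {f : α → β} (h1 : f x = f x') (h2 : f a = f b) :
    ∀ c ∈ S, ∀ d ∈ S, f c = f d := by
  have key : ∀ u v : α, u ∈ S → v ∈ S → u ≠ v → f u = f v → u ≠ x → u ≠ x' →
      ∀ c ∈ S, ∀ d ∈ S, f c = f d := by
    intro u v hu hv huv hfc hux hux'
    have hsub : ({x, x', u} : Finset α) ⊆ S := by
      intro z hz
      simp only [mem_insert, mem_singleton] at hz
      rcases hz with rfl | rfl | rfl <;> assumption
    have hcard : ({x, x', u} : Finset α).card = 3 := by
      rw [card_insert_of_notMem (by simp [hxx, Ne.symm hux]),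
        card_insert_of_notMem (by simp [Ne.symm hux']), card_singleton]
    have hSeq : S = {x, x', u} :=
      (Finset.eq_of_subset_of_card_le hsub (by omega)).symm
    have hv3 : v = x ∨ v = x' := by
      have := hSeq ▸ hv
      simp only [mem_insert, mem_singleton] at this
      rcases this with rfl | rfl | rfl
      · exact Or.inl rfl
      · exact Or.inr rfl
      · exact absurd rfl huv
    have hfu : f u = f x := by
      rcases hv3 with rfl | rfl
      · exact hfc
      · exact hfc.trans h1.symm
    have hall : ∀ c ∈ S, f c = f x := by
      intro c hc
      have := hSeq ▸ hc
      simp only [mem_insert, mem_singleton] at this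
      rcases this with rfl | rfl | rfl
      · rfl
      · exact h1.symm
      · exact hfu
    intro c hc d hd
    rw [hall c hc, hall d hd]
  by_cases hax : a = x
  · subst hax
    have hbx' : b ≠ x' := fun h => hne (Or.inl ⟨rfl, h⟩)
    exact key b a hb ha (Ne.symm hab) h2.symm (Ne.symm hab) hbx'
  · by_cases hax' : a = x'
    · subst hax'
      have hbx : b ≠ x := fun h => hne (Or.inr ⟨rfl, h⟩)
      exact key b a hb ha (Ne.symm hab) h2.symm hbx (Ne.symm hab)
    · exact key a b ha hb hab h2 hax hax'

lemma classify (hsupp : (Finset.univ.filter fun x => 0 < p x).card ≤ 3) (m : Fin N)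
    (h1 : ¬ Det p ∅ {m}) (h2 : ¬ Inj p {m}) : ∃ s t, IsPair p m s t := by
  have hcd : ∃ c d, 0 < p c ∧ 0 < p d ∧ c m ≠ d m := by
    by_contra hno
    push_neg at hno
    apply h1
    intro x x' px px' _ q hq
    rw [mem_singleton] at hq
    subst hq
    exact hno x x' px px'
  obtain ⟨c, d, pc, pd, hcdm⟩ := hcd
  have hst : ∃ s t, 0 < p s ∧ 0 < p t ∧ s ≠ t ∧ s m = t m := by
    by_contra hno
    push_neg at hno
    apply h2
    intro x x' px px' hag
    by_contra hne
    exact (hno x x' px px' hne) (hag m (mem_singleton_self m))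
  obtain ⟨s, t, ps, pt, hstne, hstm⟩ := hst
  refine ⟨s, t, ps, pt, hstne, hstm, ?_⟩
  intro x x' px px' hne hxm
  by_contra hcon
  have hne' : ¬((x = s ∧ x' = t) ∨ (x = t ∧ x' = s)) := hcon
  have hall := pigeon (S := Finset.univ.filter fun x => 0 < p x) hsupp
    (by simp [ps]) (by simp [pt]) (by simp [px]) (by simp [px'])
    hstne hne hne' (f := fun z => z m) hstm hxm
  exact hcdm (hall c (by simp [pc]) d (by simp [pd]))

lemma pair_same {m n : Fin N} {s t s' t' : ∀ i, X i}
    (hm : IsPair p m s t) (hn : IsPair p n s' t')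
    (h : (s = s' ∧ t = t') ∨ (s = t' ∧ t = s')) : Det p {m} {n} := by
  intro x x' px px' hag q hq
  rw [mem_singleton] at hq
  subst hq
  have hxm : x m = x' m := hag m (mem_singleton_self m)
  by_cases hxe : x = x'
  · rw [hxe]
  · obtain ⟨_, _, _, hstn, _⟩ := hn
    rcases hm.2.2.2.2 x x' px px' hxe hxm with ⟨rfl, rfl⟩ | ⟨rfl, rfl⟩ <;>
      rcases h with ⟨h1, h2⟩ | ⟨h1, h2⟩ <;> rw [h1, h2] <;>
        first | exact hstn | exact hstn.symm

lemma pair_diff {m n : Fin N} {s t s' t' : ∀ i, X i}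
    (hm : IsPair p m s t) (hn : IsPair p n s' t')
    (h : ¬((s = s' ∧ t = t') ∨ (s = t' ∧ t = s'))) : Inj p {m, n} := by
  intro x x' px px' hag
  have h1 : x m = x' m := hag m (by simp)
  have h2 : x n = x' n := hag n (by simp)
  by_contra hne
  rcases hm.2.2.2.2 x x' px px' hne h1 with ⟨rfl, rfl⟩ | ⟨rfl, rfl⟩ <;>
    rcases hn.2.2.2.2 _ _ px px' hne h2 with ⟨e1, e2⟩ | ⟨e1, e2⟩ <;>
      exact h (by tauto)

lemma Inj.precomp {A B : Finset (Fin N)} (h : Inj p B) (hd : Det p A B) : Inj p A :=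
  fun x x' px px' hag => h x x' px px' (hd x x' px px' hag)

lemma det_aux {a b c : Fin N} (h : Det p {a} {b}) : Det p {c, a} {b, c} := by
  intro x x' px px' hag q hq
  have hxa : x a = x' a := hag a (by simp)
  have hxc : x c = x' c := hag c (by simp)
  have hxb : x b = x' b := h x x' px px'
    (by intro r hr; rw [mem_singleton] at hr; subst hr; exact hxa) b (mem_singleton_self b)
  rcases mem_insert.mp hq with rfl | hq
  · exact hxb
  · rw [mem_singleton] at hq; subst hq; exact hxc

lemma det_aux2 {a b c : Fin N} (h : Det p {a} {b}) : Det p {c, a} {c, b} := by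
  intro x x' px px' hag q hq
  have hxa : x a = x' a := hag a (by simp)
  have hxc : x c = x' c := hag c (by simp)
  have hxb : x b = x' b := h x x' px px'
    (by intro r hr; rw [mem_singleton] at hr; subst hr; exact hxa) b (mem_singleton_self b)
  rcases mem_insert.mp hq with rfl | hq
  · exact hxc
  · rw [mem_singleton] at hq; subst hq; exact hxb

lemma Det.pair {a b c d : Fin N} (h1 : Det p {a} {b}) (h2 : Det p {c} {d}) :
    Det p {a, c} {b, d} := by
  intro x x' px px' hag q hq
  have hxa : x a = x' a := hag a (by simp)
  have hxc : x c = x' c := hag c (by simp)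
  have hxb : x b = x' b := h1 x x' px px'
    (by intro r hr; rw [mem_singleton] at hr; subst hr; exact hxa) b (mem_singleton_self b)
  have hxd : x d = x' d := h2 x x' px px'
    (by intro r hr; rw [mem_singleton] at hr; subst hr; exact hxc) d (mem_singleton_self d)
  rcases mem_insert.mp hq with rfl | hq
  · exact hxb
  · rw [mem_singleton] at hq; subst hq; exact hxd

lemma inter_pair12 {α : Type*} [DecidableEq α] {a b c : α} (h : b ≠ c) :
    ({a, b} ∩ {a, c} : Finset α) = {a} := by
  ext x
  simp only [mem_inter, mem_insert, mem_singleton]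
  constructor
  · rintro ⟨h1 | h1, h2 | h2⟩
    exacts [h1, h1, h2, absurd (h1.symm.trans h2) h]
  · rintro rfl; exact ⟨Or.inl rfl, Or.inl rfl⟩

lemma inter_pair21 {α : Type*} [DecidableEq α] {a b c : α} (h : a ≠ c) :
    ({a, b} ∩ {c, b} : Finset α) = {b} := by
  ext x
  simp only [mem_inter, mem_insert, mem_singleton]
  constructor
  · rintro ⟨h1 | h1, h2 | h2⟩
    exacts [absurd (h1.symm.trans h2) h, h2, h1, h1]
  · rintro rfl; exact ⟨Or.inr rfl, Or.inr rfl⟩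

end Pairs
section Main

variable {X : Fin 4 → Type} [∀ i, Fintype (X i)] [∀ i, DecidableEq (X i)]
variable (p : (∀ i, X i) → ℝ)

/-- The Ingleton expression. -/
noncomputable def Ing (i j k l : Fin 4) : ℝ :=
  condMI p k l {i} + condMI p k l {j} + condMI p i j ∅ - condMI p k l ∅

lemma Ing_swap_kl (i j k l : Fin 4) : Ing p i j k l = Ing p i j l k := by
  simp only [Ing, condMI, Finset.insert_comm]
  ring

lemma Ing_swap_ij (i j k l : Fin 4) : Ing p i j k l = Ing p j i k l := by
  simp only [Ing, condMI, Finset.insert_comm]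
  ring

variable (hp : ∀ x, 0 ≤ p x) (hsum : ∑ x, p x = 1)
include hp hsum

lemma case_kconst {i j k l : Fin 4} (hij : i ≠ j) (hk : Det p ∅ {k}) :
    0 ≤ Ing p i j k l := by
  have dk : ∀ A : Finset (Fin 4), Det p A {k} :=
    fun A => hk.mono_left p (Finset.empty_subset A)
  have hsing : ∀ m : Fin 4, (insert m ∅ : Finset (Fin 4)) = {m} := fun _ => rfl
  have e1 : entH p {k, i} = entH p {i} := entH_union_eq p hp (dk {i})
    (by ext a; simp only [mem_union, mem_insert, mem_singleton]; try tauto)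
  have e2 : entH p {k, l, i} = entH p {l, i} := entH_union_eq p hp (dk {l, i})
    (by ext a; simp only [mem_union, mem_insert, mem_singleton]; try tauto)
  have e3 : entH p {k, j} = entH p {j} := entH_union_eq p hp (dk {j})
    (by ext a; simp only [mem_union, mem_insert, mem_singleton]; try tauto)
  have e4 : entH p {k, l, j} = entH p {l, j} := entH_union_eq p hp (dk {l, j})
    (by ext a; simp only [mem_union, mem_insert, mem_singleton]; try tauto)
  have e5 : entH p {k} = entH p (∅ : Finset (Fin 4)) := entH_union_eq p hp hk
    (Finset.empty_union {k})
  have e6 : entH p {k, l} = entH p {l} := entH_union_eq p hp (dk {l})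
    (by ext a; simp only [mem_union, mem_insert, mem_singleton]; try tauto)
  have h0 : entH p (∅ : Finset (Fin 4)) = 0 := entH_empty p hp hsum
  have sub := entH_submod p hp {i} {j}
  rw [show ({i} ∪ {j} : Finset (Fin 4)) = {i, j} by
      ext a; simp only [mem_union, mem_insert, mem_singleton]; try tauto,
    Finset.singleton_inter_of_notMem (by simp [hij])] at sub
  simp only [Ing, condMI, hsing]
  linarith

lemma case_iconst {i j k l : Fin 4} (hkl : k ≠ l) (hi : Det p ∅ {i}) :
    0 ≤ Ing p i j k l := by
  have di : ∀ A : Finset (Fin 4), Det p A {i} :=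
    fun A => hi.mono_left p (Finset.empty_subset A)
  have hsing : ∀ m : Fin 4, (insert m ∅ : Finset (Fin 4)) = {m} := fun _ => rfl
  have e1 : entH p {k, i} = entH p {k} := entH_union_eq p hp (di {k})
    (by ext a; simp only [mem_union, mem_insert, mem_singleton]; try tauto)
  have e2 : entH p {l, i} = entH p {l} := entH_union_eq p hp (di {l})
    (by ext a; simp only [mem_union, mem_insert, mem_singleton]; try tauto)
  have e3 : entH p {k, l, i} = entH p {k, l} := entH_union_eq p hp (di {k, l})
    (by ext a; simp only [mem_union, mem_insert, mem_singleton]; try tauto)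
  have e4 : entH p {i} = entH p (∅ : Finset (Fin 4)) := entH_union_eq p hp hi
    (Finset.empty_union {i})
  have e5 : entH p {i, j} = entH p {j} := entH_union_eq p hp (di {j})
    (by ext a; simp only [mem_union, mem_insert, mem_singleton]; try tauto)
  have h0 : entH p (∅ : Finset (Fin 4)) = 0 := entH_empty p hp hsum
  have sub := entH_submod p hp {k, j} {l, j}
  rw [show ({k, j} ∪ {l, j} : Finset (Fin 4)) = {k, l, j} by
      ext a; simp only [mem_union, mem_insert, mem_singleton]; try tauto,
    inter_pair21 hkl] at sub
  simp only [Ing, condMI, hsing]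
  linarith

lemma case_kinj {i j k l : Fin 4} (hij : i ≠ j) (hk : Inj p {k}) :
    0 ≤ Ing p i j k l := by
  have hsing : ∀ m : Fin 4, (insert m ∅ : Finset (Fin 4)) = {m} := fun _ => rfl
  have uk : ∀ A : Finset (Fin 4), k ∈ A → entH p A = entH p univ :=
    fun A hA => entH_inj p hp (hk.mono p (by intro a ha; rw [mem_singleton] at ha; subst ha; exact hA))
  have u1 : entH p {k, i} = entH p univ := uk _ (by simp)
  have u2 : entH p {k, l, i} = entH p univ := uk _ (by simp)
  have u3 : entH p {k, j} = entH p univ := uk _ (by simp)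
  have u4 : entH p {k, l, j} = entH p univ := uk _ (by simp)
  have u5 : entH p {k} = entH p univ := uk _ (by simp)
  have u6 : entH p {k, l} = entH p univ := uk _ (by simp)
  have h0 : entH p (∅ : Finset (Fin 4)) = 0 := entH_empty p hp hsum
  have sub := entH_submod p hp {l, i} {l, j}
  rw [show ({l, i} ∪ {l, j} : Finset (Fin 4)) = {l, i, j} by
      ext a; simp only [mem_union, mem_insert, mem_singleton]; try tauto,
    inter_pair12 hij] at sub
  have mono : entH p {i, j} ≤ entH p {l, i, j} := entH_mono p hp
    (by intro a ha; simp only [mem_insert, mem_singleton] at ha ⊢; tauto)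
  simp only [Ing, condMI, hsing]
  linarith

lemma case_iinj {i j k l : Fin 4} (hjl : j ≠ l) (hi : Inj p {i}) :
    0 ≤ Ing p i j k l := by
  have hsing : ∀ m : Fin 4, (insert m ∅ : Finset (Fin 4)) = {m} := fun _ => rfl
  have ui : ∀ A : Finset (Fin 4), i ∈ A → entH p A = entH p univ :=
    fun A hA => entH_inj p hp (hi.mono p (by intro a ha; rw [mem_singleton] at ha; subst ha; exact hA))
  have u1 : entH p {i} = entH p univ := ui _ (by simp)
  have u2 : entH p {k, i} = entH p univ := ui _ (by simp)
  have u3 : entH p {l, i} = entH p univ := ui _ (by simp)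
  have u4 : entH p {k, l, i} = entH p univ := ui _ (by simp)
  have u5 : entH p {i, j} = entH p univ := ui _ (by simp)
  have h0 : entH p (∅ : Finset (Fin 4)) = 0 := entH_empty p hp hsum
  have sub := entH_submod p hp {k, j} {k, l}
  rw [show ({k, j} ∪ {k, l} : Finset (Fin 4)) = {k, l, j} by
      ext a; simp only [mem_union, mem_insert, mem_singleton]; try tauto,
    inter_pair12 hjl] at sub
  have mono : entH p {l} ≤ entH p {l, j} := entH_mono p hp
    (by intro a ha; simp only [mem_insert, mem_singleton] at ha ⊢; tauto)
  simp only [Ing, condMI, hsing]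
  linarith

lemma case_match_kl {i j k l : Fin 4} (hij : i ≠ j)
    (h1 : Det p {k} {l}) (h2 : Det p {l} {k}) :
    0 ≤ Ing p i j k l := by
  have hsing : ∀ m : Fin 4, (insert m ∅ : Finset (Fin 4)) = {m} := fun _ => rfl
  have a1 : entH p {k, l, i} = entH p {l, i} := entH_union_eq p hp
    (h2.mono_left p (by intro a ha; simp only [mem_insert, mem_singleton] at ha ⊢; tauto))
    (by ext a; simp only [mem_union, mem_insert, mem_singleton]; try tauto)
  have a2 : entH p {k, l, i} = entH p {k, i} := entH_union_eq p hp
    (h1.mono_left p (by intro a ha; simp only [mem_insert, mem_singleton] at ha ⊢; tauto))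
    (by ext a; simp only [mem_union, mem_insert, mem_singleton]; try tauto)
  have a3 : entH p {k, l, j} = entH p {l, j} := entH_union_eq p hp
    (h2.mono_left p (by intro a ha; simp only [mem_insert, mem_singleton] at ha ⊢; tauto))
    (by ext a; simp only [mem_union, mem_insert, mem_singleton]; try tauto)
  have a4 : entH p {k, l, j} = entH p {k, j} := entH_union_eq p hp
    (h1.mono_left p (by intro a ha; simp only [mem_insert, mem_singleton] at ha ⊢; tauto))
    (by ext a; simp only [mem_union, mem_insert, mem_singleton]; try tauto)
  have a5 : entH p {k, l} = entH p {k} := entH_union_eq p hp h1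
    (by ext a; simp only [mem_union, mem_insert, mem_singleton]; try tauto)
  have a6 : entH p {k, l} = entH p {l} := entH_union_eq p hp h2
    (by ext a; simp only [mem_union, mem_insert, mem_singleton]; try tauto)
  have h0 : entH p (∅ : Finset (Fin 4)) = 0 := entH_empty p hp hsum
  have sub := entH_submod p hp {k, i} {k, j}
  rw [show ({k, i} ∪ {k, j} : Finset (Fin 4)) = {k, i, j} by
      ext a; simp only [mem_union, mem_insert, mem_singleton]; try tauto,
    inter_pair12 hij] at sub
  have mono : entH p {i, j} ≤ entH p {k, i, j} := entH_mono p hp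
    (by intro a ha; simp only [mem_insert, mem_singleton] at ha ⊢; tauto)
  simp only [Ing, condMI, hsing]
  linarith

lemma case_KK {i j k l : Fin 4}
    (hKL : Inj p {k, l}) (hik : Det p {i} {k}) (hki : Det p {k} {i})
    (hjk : Det p {j} {k}) (hkj : Det p {k} {j}) :
    0 ≤ Ing p i j k l := by
  have hsing : ∀ m : Fin 4, (insert m ∅ : Finset (Fin 4)) = {m} := fun _ => rfl
  have ukl : ∀ A : Finset (Fin 4), k ∈ A → l ∈ A → entH p A = entH p univ := by
    intro A hkA hlA
    refine entH_inj p hp (hKL.mono p ?_)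
    intro a ha
    simp only [mem_insert, mem_singleton] at ha
    rcases ha with rfl | rfl <;> assumption
  have e1 : entH p {k, i} = entH p {i} := entH_union_eq p hp hik
    (by ext a; simp only [mem_union, mem_insert, mem_singleton]; try tauto)
  have e2 : entH p {k, i} = entH p {k} := entH_union_eq p hp hki
    (by ext a; simp only [mem_union, mem_insert, mem_singleton]; try tauto)
  have e3 : entH p {k, j} = entH p {j} := entH_union_eq p hp hjk
    (by ext a; simp only [mem_union, mem_insert, mem_singleton]; try tauto)
  have e4 : entH p {k, j} = entH p {k} := entH_union_eq p hp hkj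
    (by ext a; simp only [mem_union, mem_insert, mem_singleton]; try tauto)
  have e5 : entH p {i, j} = entH p {i} := entH_union_eq p hp (hik.trans p hkj)
    (by ext a; simp only [mem_union, mem_insert, mem_singleton]; try tauto)
  have u1 : entH p {k, l, i} = entH p univ := ukl _ (by simp) (by simp)
  have u2 : entH p {l, i} = entH p univ :=
    entH_inj p hp (hKL.precomp p (det_aux p hik))
  have u3 : entH p {k, l, j} = entH p univ := ukl _ (by simp) (by simp)
  have u4 : entH p {l, j} = entH p univ :=
    entH_inj p hp (hKL.precomp p (det_aux p hjk))
  have u5 : entH p {k, l} = entH p univ := ukl _ (by simp) (by simp)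
  have mono : entH p {l} ≤ entH p univ := entH_mono p hp (Finset.subset_univ _)
  have h0 : entH p (∅ : Finset (Fin 4)) = 0 := entH_empty p hp hsum
  simp only [Ing, condMI, hsing]
  linarith

lemma case_KL {i j k l : Fin 4}
    (hKL : Inj p {k, l}) (hik : Det p {i} {k}) (hki : Det p {k} {i})
    (hjl : Det p {j} {l}) (hlj : Det p {l} {j}) :
    0 ≤ Ing p i j k l := by
  have hsing : ∀ m : Fin 4, (insert m ∅ : Finset (Fin 4)) = {m} := fun _ => rfl
  have ukl : ∀ A : Finset (Fin 4), k ∈ A → l ∈ A → entH p A = entH p univ := by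
    intro A hkA hlA
    refine entH_inj p hp (hKL.mono p ?_)
    intro a ha
    simp only [mem_insert, mem_singleton] at ha
    rcases ha with rfl | rfl <;> assumption
  have e1 : entH p {k, i} = entH p {i} := entH_union_eq p hp hik
    (by ext a; simp only [mem_union, mem_insert, mem_singleton]; try tauto)
  have e2 : entH p {k, i} = entH p {k} := entH_union_eq p hp hki
    (by ext a; simp only [mem_union, mem_insert, mem_singleton]; try tauto)
  have e3 : entH p {l, j} = entH p {j} := entH_union_eq p hp hjl
    (by ext a; simp only [mem_union, mem_insert, mem_singleton]; try tauto)
  have e4 : entH p {l, j} = entH p {l} := entH_union_eq p hp hlj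
    (by ext a; simp only [mem_union, mem_insert, mem_singleton]; try tauto)
  have u1 : entH p {l, i} = entH p univ :=
    entH_inj p hp (hKL.precomp p (det_aux p hik))
  have u2 : entH p {k, l, i} = entH p univ := ukl _ (by simp) (by simp)
  have u3 : entH p {k, j} = entH p univ :=
    entH_inj p hp (hKL.precomp p (det_aux2 p hjl))
  have u4 : entH p {k, l, j} = entH p univ := ukl _ (by simp) (by simp)
  have u5 : entH p {k, l} = entH p univ := ukl _ (by simp) (by simp)
  have u6 : entH p {i, j} = entH p univ :=
    entH_inj p hp (hKL.precomp p (Det.pair p hik hjl))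
  have h0 : entH p (∅ : Finset (Fin 4)) = 0 := entH_empty p hp hsum
  simp only [Ing, condMI, hsing]
  linarith

lemma case_KC {i j k l : Fin 4}
    (hKL : Inj p {k, l}) (hik : Det p {i} {k}) (hki : Det p {k} {i})
    (hjk : Inj p {j, k}) (hjl : Inj p {j, l}) :
    0 ≤ Ing p i j k l := by
  have hsing : ∀ m : Fin 4, (insert m ∅ : Finset (Fin 4)) = {m} := fun _ => rfl
  have ukl : ∀ A : Finset (Fin 4), k ∈ A → l ∈ A → entH p A = entH p univ := by
    intro A hkA hlA
    refine entH_inj p hp (hKL.mono p ?_)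
    intro a ha
    simp only [mem_insert, mem_singleton] at ha
    rcases ha with rfl | rfl <;> assumption
  have ujk : ∀ A : Finset (Fin 4), j ∈ A → k ∈ A → entH p A = entH p univ := by
    intro A hjA hkA
    refine entH_inj p hp (hjk.mono p ?_)
    intro a ha
    simp only [mem_insert, mem_singleton] at ha
    rcases ha with rfl | rfl <;> assumption
  have ujl : ∀ A : Finset (Fin 4), j ∈ A → l ∈ A → entH p A = entH p univ := by
    intro A hjA hlA
    refine entH_inj p hp (hjl.mono p ?_)
    intro a ha
    simp only [mem_insert, mem_singleton] at ha
    rcases ha with rfl | rfl <;> assumption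
  have e1 : entH p {k, i} = entH p {i} := entH_union_eq p hp hik
    (by ext a; simp only [mem_union, mem_insert, mem_singleton]; try tauto)
  have e2 : entH p {k, i} = entH p {k} := entH_union_eq p hp hki
    (by ext a; simp only [mem_union, mem_insert, mem_singleton]; try tauto)
  have u1 : entH p {l, i} = entH p univ :=
    entH_inj p hp (hKL.precomp p (det_aux p hik))
  have u2 : entH p {k, l, i} = entH p univ := ukl _ (by simp) (by simp)
  have u3 : entH p {k, j} = entH p univ := ujk _ (by simp) (by simp)
  have u4 : entH p {l, j} = entH p univ := ujl _ (by simp) (by simp)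
  have u5 : entH p {k, l, j} = entH p univ := ukl _ (by simp) (by simp)
  have u6 : entH p {k, l} = entH p univ := ukl _ (by simp) (by simp)
  have m1 : entH p {i, j} ≤ entH p univ := entH_mono p hp (Finset.subset_univ _)
  have m2 : entH p {l} ≤ entH p univ := entH_mono p hp (Finset.subset_univ _)
  have h0 : entH p (∅ : Finset (Fin 4)) = 0 := entH_empty p hp hsum
  simp only [Ing, condMI, hsing]
  linarith

lemma case_CC {i j k l : Fin 4}
    (hKL : Inj p {k, l}) (hik : Inj p {i, k}) (hil : Inj p {i, l})
    (hjk : Inj p {j, k}) (hjl : Inj p {j, l}) :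
    0 ≤ Ing p i j k l := by
  have hsing : ∀ m : Fin 4, (insert m ∅ : Finset (Fin 4)) = {m} := fun _ => rfl
  have mk2 : ∀ (a b : Fin 4), Inj p {a, b} →
      ∀ A : Finset (Fin 4), a ∈ A → b ∈ A → entH p A = entH p univ := by
    intro a b hab A haA hbA
    refine entH_inj p hp (hab.mono p ?_)
    intro c hc
    simp only [mem_insert, mem_singleton] at hc
    rcases hc with rfl | rfl <;> assumption
  have u1 : entH p {k, i} = entH p univ := mk2 i k hik _ (by simp) (by simp)
  have u2 : entH p {l, i} = entH p univ := mk2 i l hil _ (by simp) (by simp)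
  have u3 : entH p {k, l, i} = entH p univ := mk2 k l hKL _ (by simp) (by simp)
  have u4 : entH p {k, j} = entH p univ := mk2 j k hjk _ (by simp) (by simp)
  have u5 : entH p {l, j} = entH p univ := mk2 j l hjl _ (by simp) (by simp)
  have u6 : entH p {k, l, j} = entH p univ := mk2 k l hKL _ (by simp) (by simp)
  have u7 : entH p {k, l} = entH p univ := mk2 k l hKL _ (by simp) (by simp)
  have m1 : entH p {i, j} ≤ entH p univ := entH_mono p hp (Finset.subset_univ _)
  have m2 : entH p {k} ≤ entH p univ := entH_mono p hp (Finset.subset_univ _)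
  have m3 : entH p {l} ≤ entH p univ := entH_mono p hp (Finset.subset_univ _)
  have h0 : entH p (∅ : Finset (Fin 4)) = 0 := entH_empty p hp hsum
  simp only [Ing, condMI, hsing]
  linarith

end Main

/-- Any joint distribution of four discrete random variables supported on at most 3 atoms
satisfies all six Ingleton inequalities. -/
theorem stmt12 (X : Fin 4 → Type) [∀ i, Fintype (X i)] [∀ i, DecidableEq (X i)]
    (p : (∀ i, X i) → ℝ) (hp : ∀ x, 0 ≤ p x) (hsum : ∑ x, p x = 1)
    (hsupp : (Finset.univ.filter fun x => 0 < p x).card ≤ 3) :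
    ∀ i j k l : Fin 4, ({i, j, k, l} : Finset (Fin 4)) = Finset.univ →
      0 ≤ condMI p k l {i} + condMI p k l {j} + condMI p i j ∅ - condMI p k l ∅ := by
  intro i j k l huniv
  obtain ⟨dij, dik, dil, djk, djl, dkl⟩ :=
    (by decide : ∀ i j k l : Fin 4, ({i, j, k, l} : Finset (Fin 4)) = Finset.univ →
      i ≠ j ∧ i ≠ k ∧ i ≠ l ∧ j ≠ k ∧ j ≠ l ∧ k ≠ l) i j k l huniv
  show 0 ≤ Ing p i j k l
  by_cases hck : Det p ∅ {k}
  · exact case_kconst p hp hsum dij hck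
  by_cases hcl : Det p ∅ {l}
  · rw [Ing_swap_kl]; exact case_kconst p hp hsum dij hcl
  by_cases hci : Det p ∅ {i}
  · exact case_iconst p hp hsum dkl hci
  by_cases hcj : Det p ∅ {j}
  · rw [Ing_swap_ij]; exact case_iconst p hp hsum dkl hcj
  by_cases hfk : Inj p {k}
  · exact case_kinj p hp hsum dij hfk
  by_cases hfl : Inj p {l}
  · rw [Ing_swap_kl]; exact case_kinj p hp hsum dij hfl
  by_cases hfi : Inj p {i}
  · exact case_iinj p hp hsum djl hfi
  by_cases hfj : Inj p {j}
  · rw [Ing_swap_ij]; exact case_iinj p hp hsum dil hfj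
  -- all four coordinates are pair-type
  obtain ⟨sk, tk, Pk⟩ := classify p hsupp k hck hfk
  obtain ⟨sl, tl, Pl⟩ := classify p hsupp l hcl hfl
  obtain ⟨si, ti, Pi⟩ := classify p hsupp i hci hfi
  obtain ⟨sj, tj, Pj⟩ := classify p hsupp j hcj hfj
  by_cases hm1 : (sk = sl ∧ tk = tl) ∨ (sk = tl ∧ tk = sl)
  · -- k and l are informationally equivalent
    have hm1' : (sl = sk ∧ tl = tk) ∨ (sl = tk ∧ tl = sk) := by
      rcases hm1 with ⟨h1, h2⟩ | ⟨h1, h2⟩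
      · exact Or.inl ⟨h1.symm, h2.symm⟩
      · exact Or.inr ⟨h2.symm, h1.symm⟩
    exact case_match_kl p hp hsum dij (pair_same p Pk Pl hm1) (pair_same p Pl Pk hm1')
  have hKL : Inj p {k, l} := pair_diff p Pk Pl hm1
  have hLK : Inj p {l, k} := hKL.mono p
    (by intro a ha; simp only [mem_insert, mem_singleton] at ha ⊢; tauto)
  have symm2 : ∀ (s t s' t' : ∀ m, X m), ((s = s' ∧ t = t') ∨ (s = t' ∧ t = s')) →
      ((s' = s ∧ t' = t) ∨ (s' = t ∧ t' = s)) := by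
    intro s t s' t' h
    rcases h with ⟨h1, h2⟩ | ⟨h1, h2⟩
    · exact Or.inl ⟨h1.symm, h2.symm⟩
    · exact Or.inr ⟨h2.symm, h1.symm⟩
  by_cases hm2 : (si = sk ∧ ti = tk) ∨ (si = tk ∧ ti = sk)
  · -- i ~ k
    have hik := pair_same p Pi Pk hm2
    have hki := pair_same p Pk Pi (symm2 _ _ _ _ hm2)
    by_cases hm3 : (sj = sk ∧ tj = tk) ∨ (sj = tk ∧ tj = sk)
    · exact case_KK p hp hsum hKL hik hki (pair_same p Pj Pk hm3)
        (pair_same p Pk Pj (symm2 _ _ _ _ hm3))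
    by_cases hm4 : (sj = sl ∧ tj = tl) ∨ (sj = tl ∧ tj = sl)
    · exact case_KL p hp hsum hKL hik hki (pair_same p Pj Pl hm4)
        (pair_same p Pl Pj (symm2 _ _ _ _ hm4))
    · exact case_KC p hp hsum hKL hik hki (pair_diff p Pj Pk hm3) (pair_diff p Pj Pl hm4)
  by_cases hm5 : (si = sl ∧ ti = tl) ∨ (si = tl ∧ ti = sl)
  · -- i ~ l
    have hil := pair_same p Pi Pl hm5
    have hli := pair_same p Pl Pi (symm2 _ _ _ _ hm5)
    by_cases hm6 : (sj = sl ∧ tj = tl) ∨ (sj = tl ∧ tj = sl)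
    · rw [Ing_swap_kl]
      exact case_KK p hp hsum hLK hil hli (pair_same p Pj Pl hm6)
        (pair_same p Pl Pj (symm2 _ _ _ _ hm6))
    by_cases hm7 : (sj = sk ∧ tj = tk) ∨ (sj = tk ∧ tj = sk)
    · rw [Ing_swap_kl]
      exact case_KL p hp hsum hLK hil hli (pair_same p Pj Pk hm7)
        (pair_same p Pk Pj (symm2 _ _ _ _ hm7))
    · rw [Ing_swap_kl]
      exact case_KC p hp hsum hLK hil hli (pair_diff p Pj Pl hm6) (pair_diff p Pj Pk hm7)
  -- i is the third pair
  have hIK : Inj p {i, k} := pair_diff p Pi Pk hm2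
  have hIL : Inj p {i, l} := pair_diff p Pi Pl hm5
  by_cases hm8 : (sj = sk ∧ tj = tk) ∨ (sj = tk ∧ tj = sk)
  · rw [Ing_swap_ij]
    exact case_KC p hp hsum hKL (pair_same p Pj Pk hm8)
      (pair_same p Pk Pj (symm2 _ _ _ _ hm8)) hIK hIL
  by_cases hm9 : (sj = sl ∧ tj = tl) ∨ (sj = tl ∧ tj = sl)
  · rw [Ing_swap_ij, Ing_swap_kl]
    exact case_KC p hp hsum hLK (pair_same p Pj Pl hm9)
      (pair_same p Pl Pj (symm2 _ _ _ _ hm9)) hIL hIK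
  · exact case_CC p hp hsum hKL hIK hIL (pair_diff p Pj Pk hm8) (pair_diff p Pj Pl hm9)
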